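/- arXiv:1502.02320 — 6 statements merged into one kernel-verified Lean document; each statement's English description precedes it below -/
import Mathlib

section
/- Let x be a right-continuous function with left limits from [0,∞) to ℝ with x(0) ≥ 0. Define y(t) = -inf_{0≤s≤t} min(x(s), 0) and z(t) = x(t) + y(t). Then (z, y) solves the one-dimensional Skorohod problem for x: z(t) ≥ 0 for all t, y(0) = 0, y is non-decreasing, and y increases only when z = 0 (i.e., ∫_{[0,∞)} z(t) dy(t) = 0). -/
open MeasureTheory Set Filter

/-- `x` is right-continuous with left limits on `[0,∞)`. -/
def RCLL (x : ℝ → ℝ) : Prop :=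
  (∀ t : ℝ, 0 ≤ t → ContinuousWithinAt x (Set.Ici t) t) ∧
  (∀ t : ℝ, 0 < t → ∃ l : ℝ, Filter.Tendsto x (nhdsWithin t (Set.Iio t)) (nhds l))

/-!
Write `m t = inf_{[0,t]} min (x, 0)`, so that `y = -m`. An RCLL function is locally bounded below,
hence bounded below on compact intervals, so `m` is finite, antitone, nonpositive and `m ≤ x`,
which gives `z ≥ 0`; right-continuity of `x` makes `m` right-continuous, so `y` extends to a
Stieltjes function. If `z t > 0`, i.e. `m t < x t`, then right-continuity keeps `x` above `m t` on
some `[t, u]`, so `y` is constant there, and `y` has no jump at `t` (either `m t = 0`, or the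
infimum is approached before `t`). A Stieltjes measure gives no mass to a set of non-atoms each of
which starts an interval of constancy: the open intervals are null by Lindelöf, and the points
they miss are left endpoints of pairwise disjoint intervals, hence countably many.
-/

open Topology

theorem IsCompact.bddBelow_image_of_isBoundedUnder {X α : Type*} [TopologicalSpace X]
    [LinearOrder α] [Nonempty α] {f : X → α} {s : Set X} (hs : IsCompact s)
    (hf : ∀ a ∈ s, IsBoundedUnder (· ≥ ·) (𝓝[s] a) f) : BddBelow (f '' s) := by
  refine hs.induction_on (p := fun t => BddBelow (f '' t)) (by simp)
    (fun _ _ hst h => h.mono (image_mono hst))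
    (fun _ _ h₁ h₂ => by rw [image_union]; exact h₁.union h₂) fun a ha => ?_
  obtain ⟨t, ht, hts⟩ := isBoundedUnder_iff_eventually_bddBelow.1 (hf a ha)
  exact ⟨t, hts, ht⟩

namespace RCLL

variable {x : ℝ → ℝ} {t : ℝ}

theorem isBoundedUnder_ge (hx : RCLL x) (ht : 0 ≤ t) :
    IsBoundedUnder (· ≥ ·) (𝓝[Ici 0] t) x := by
  have hright : IsBoundedUnder (· ≥ ·) (𝓝[≥] t) x := (hx.1 t ht).isBoundedUnder_ge
  rcases ht.eq_or_lt with rfl | ht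
  · exact hright
  · obtain ⟨l, hl⟩ := hx.2 t ht
    refine IsBoundedUnder.mono nhdsWithin_le_nhds ?_
    rw [← nhdsLT_sup_nhdsGE, IsBoundedUnder, map_sup]
    exact isBounded_sup hl.isBoundedUnder_ge hright

theorem bddBelow_image_Icc (hx : RCLL x) (t : ℝ) : BddBelow (x '' Icc 0 t) :=
  isCompact_Icc.bddBelow_image_of_isBoundedUnder fun _ hs =>
    (hx.isBoundedUnder_ge hs.1).mono (nhdsWithin_mono _ Icc_subset_Ici_self)

theorem exists_forall_Icc_lt (hx : RCLL x) (ht : 0 ≤ t) {c : ℝ} (hc : c < x t) :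
    ∃ u > t, ∀ r ∈ Icc t u, c < x r :=
  mem_nhdsGE_iff_exists_Icc_subset.1 ((hx.1 t ht).eventually (lt_mem_nhds hc))

end RCLL

namespace StieltjesFunction

variable (f : StieltjesFunction ℝ)

theorem measure_singleton_eq_zero_of_forall_exists_lt {t : ℝ}
    (h : ∀ ε > 0, ∃ a < t, f t ≤ f a + ε) : f.measure {t} = 0 := by
  rw [f.measure_singleton, ENNReal.ofReal_eq_zero, sub_nonpos]
  refine le_of_forall_pos_le_add fun ε hε => ?_
  obtain ⟨a, hat, ha⟩ := h ε hε
  exact ha.trans (add_le_add_left (f.mono.le_leftLim hat) ε)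

theorem measure_eq_zero_of_forall_exists_eq {B : Set ℝ} (hflat : ∀ t ∈ B, ∃ u > t, f u = f t)
    (hatom : ∀ t ∈ B, f.measure {t} = 0) : f.measure B = 0 := by
  choose! u htu hfu using hflat
  obtain ⟨T, hTB, hT, hTV⟩ :=
    TopologicalSpace.isOpen_biUnion_countable B (fun t => Ioo t (u t)) fun _ _ => isOpen_Ioo
  set V := ⋃ t ∈ B, Ioo t (u t)
  have hV : f.measure V = 0 := by
    rw [← hTV]
    refine (measure_biUnion_null_iff hT).2 fun t ht => measure_mono_null Ioo_subset_Ioc_self ?_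
    rw [f.measure_Ioc, hfu t (hTB ht), sub_self, ENNReal.ofReal_zero]
  have hdisj : (B \ V).PairwiseDisjoint fun t => Ioo t (u t) := by
    have hdisj_of_lt : ∀ t₁ ∈ B \ V, ∀ t₂ ∈ B \ V, t₁ < t₂ →
        Disjoint (Ioo t₁ (u t₁)) (Ioo t₂ (u t₂)) := by
      intro t₁ h₁ t₂ h₂ hlt
      have : u t₁ ≤ t₂ := not_lt.1 fun h => h₂.2 (mem_biUnion h₁.1 ⟨hlt, h⟩)
      exact disjoint_left.2 fun r hr₁ hr₂ => lt_asymm (hr₁.2.trans_le this) hr₂.1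
    intro t₁ h₁ t₂ h₂ hne
    rcases hne.lt_or_gt with hlt | hlt
    · exact hdisj_of_lt t₁ h₁ t₂ h₂ hlt
    · exact (hdisj_of_lt t₂ h₂ t₁ h₁ hlt).symm
  have hE : (B \ V).Countable := hdisj.countable_of_Ioo fun t ht => htu t ht.1
  rw [← measure_sdiff_null hV, ← biUnion_of_singleton (B \ V)]
  exact (measure_biUnion_null_iff hE).2 fun t ht => hatom t ht.1

end StieltjesFunction

namespace Skorohod

noncomputable def runningInf (x : ℝ → ℝ) (t : ℝ) : ℝ :=
  sInf ((fun s => min (x s) 0) '' Icc 0 t)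

variable {x : ℝ → ℝ} {s t : ℝ}

theorem bddBelow_image_min_Icc (hx : RCLL x) (t : ℝ) :
    BddBelow ((fun s => min (x s) 0) '' Icc 0 t) := by
  obtain ⟨b, hb⟩ := hx.bddBelow_image_Icc t
  refine ⟨min b 0, ?_⟩
  rintro _ ⟨s, hs, rfl⟩
  exact min_le_min_right 0 (hb (mem_image_of_mem x hs))

theorem runningInf_le (hx : RCLL x) (hs : s ∈ Icc 0 t) : runningInf x t ≤ min (x s) 0 :=
  csInf_le (bddBelow_image_min_Icc hx t) (mem_image_of_mem _ hs)

theorem runningInf_nonpos (hx : RCLL x) (ht : 0 ≤ t) : runningInf x t ≤ 0 :=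
  (runningInf_le hx ⟨ht, le_rfl⟩).trans (min_le_right _ _)

theorem runningInf_le_apply (hx : RCLL x) (ht : 0 ≤ t) : runningInf x t ≤ x t :=
  (runningInf_le hx ⟨ht, le_rfl⟩).trans (min_le_left _ _)

theorem runningInf_zero (hx0 : 0 ≤ x 0) : runningInf x 0 = 0 := by
  simp [runningInf, hx0]

theorem runningInf_antitoneOn (hx : RCLL x) : AntitoneOn (runningInf x) (Ici 0) :=
  fun _ hs t _ hst => csInf_le_csInf (bddBelow_image_min_Icc hx t) ((nonempty_Icc.2 hs).image _)
    (image_mono (Icc_subset_Icc_right hst))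

theorem le_runningInf_of_forall_Ioc_le (hx : RCLL x) (ht : 0 ≤ t) (hts : t ≤ s) {c : ℝ}
    (hc : c ≤ runningInf x t) (h : ∀ r ∈ Ioc t s, c ≤ x r) : c ≤ runningInf x s := by
  refine le_csInf ((nonempty_Icc.2 (ht.trans hts)).image _) ?_
  rintro _ ⟨r, hr, rfl⟩
  rcases le_or_gt r t with hrt | hrt
  · exact hc.trans (runningInf_le hx ⟨hr.1, hrt⟩)
  · exact le_min (h r ⟨hrt, hr.2⟩) (hc.trans (runningInf_nonpos hx ht))

theorem continuousWithinAt_runningInf (hx : RCLL x) (ht : 0 ≤ t) :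
    ContinuousWithinAt (runningInf x) (Ici t) t := by
  refine tendsto_order.2 ⟨fun b hb => ?_, fun b hb => ?_⟩
  · obtain ⟨c, hbc, hct⟩ := exists_between hb
    obtain ⟨u, htu, hu⟩ := hx.exists_forall_Icc_lt ht (hct.trans_le (runningInf_le_apply hx ht))
    filter_upwards [Icc_mem_nhdsGE htu] with s hs
    exact hbc.trans_le <| le_runningInf_of_forall_Ioc_le hx ht hs.1 hct.le
      fun r hr => (hu r ⟨hr.1.le, hr.2.trans hs.2⟩).le
  · filter_upwards [self_mem_nhdsWithin] with s hs
    exact (runningInf_antitoneOn hx ht (ht.trans hs) hs).trans_lt hb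

theorem exists_gt_runningInf_eq (hx : RCLL x) (ht : 0 ≤ t) (h : runningInf x t < x t) :
    ∃ u > t, runningInf x u = runningInf x t := by
  obtain ⟨u, htu, hu⟩ := hx.exists_forall_Icc_lt ht h
  refine ⟨u, htu, le_antisymm (runningInf_antitoneOn hx ht (ht.trans htu.le) htu.le) ?_⟩
  exact le_runningInf_of_forall_Ioc_le hx ht htu.le le_rfl
    fun r hr => (hu r (Ioc_subset_Icc_self hr)).le

theorem exists_runningInf_le_add (hx : RCLL x) (ht : 0 ≤ t) (hneg : runningInf x t < 0)
    (hlt : runningInf x t < x t) {ε : ℝ} (hε : 0 < ε) :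
    ∃ a ∈ Ico 0 t, runningInf x a ≤ runningInf x t + ε := by
  have : runningInf x t < min (min (x t) 0) (runningInf x t + ε) :=
    lt_min (lt_min hlt hneg) (lt_add_of_pos_right _ hε)
  obtain ⟨_, ⟨a, ha, rfl⟩, hat⟩ := exists_lt_of_csInf_lt ((nonempty_Icc.2 ht).image _) this
  refine ⟨a, ⟨ha.1, ha.2.lt_of_ne ?_⟩,
    ((runningInf_le hx ⟨ha.1, le_rfl⟩).trans_lt (hat.trans_le (min_le_right _ _))).le⟩
  rintro rfl
  exact (hat.trans_le (min_le_left _ _)).false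

noncomputable def regulator (x : ℝ → ℝ) (hx : RCLL x) : StieltjesFunction ℝ where
  toFun t := -runningInf x (max t 0)
  mono' s t hst := neg_le_neg <| runningInf_antitoneOn hx (le_max_right s 0) (le_max_right t 0)
    (max_le_max_right 0 hst)
  right_continuous' t := by
    have hmax : ContinuousWithinAt (fun s : ℝ => max s 0) (Ici t) t :=
      (continuous_id.max continuous_const).continuousWithinAt
    exact ((continuousWithinAt_runningInf hx (le_max_right t 0)).comp (x := t) hmax
      fun _ hs => max_le_max_right 0 hs).neg

theorem regulator_apply (hx : RCLL x) (ht : 0 ≤ t) : regulator x hx t = -runningInf x t := by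
  show -runningInf x (max t 0) = _
  rw [max_eq_left ht]

theorem measure_regulator_setOf_runningInf_lt (hx : RCLL x) :
    (regulator x hx).measure {t | 0 ≤ t ∧ runningInf x t < x t} = 0 := by
  refine StieltjesFunction.measure_eq_zero_of_forall_exists_eq _ (fun t ⟨ht, hlt⟩ => ?_)
    fun t ⟨ht, hlt⟩ => ?_
  · obtain ⟨u, htu, hu⟩ := exists_gt_runningInf_eq hx ht hlt
    exact ⟨u, htu, by rw [regulator_apply hx (ht.trans htu.le), regulator_apply hx ht, hu]⟩
  refine StieltjesFunction.measure_singleton_eq_zero_of_forall_exists_lt _ fun ε hε => ?_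
  rcases (runningInf_nonpos hx ht).lt_or_eq with hneg | hzero
  · obtain ⟨a, ha, hat⟩ := exists_runningInf_le_add hx ht hneg hlt hε
    refine ⟨a, ha.2, ?_⟩
    rw [regulator_apply hx ht, regulator_apply hx ha.1]
    linarith
  · refine ⟨t - 1, sub_one_lt t, ?_⟩
    have : 0 ≤ regulator x hx (t - 1) := neg_nonneg.2 (runningInf_nonpos hx (le_max_right _ _))
    rw [regulator_apply hx ht, hzero]
    linarith

end Skorohod

/-- The explicit pair `(z, y)` with `y(t) = -inf_{0≤s≤t} min(x(s),0)` and
`z(t) = x(t) + y(t)` solves the one-dimensional Skorohod problem for `x`. -/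
theorem skorohod_explicit_solution (x : ℝ → ℝ) (hx : RCLL x) (hx0 : 0 ≤ x 0) :
    let y : ℝ → ℝ := fun t => -sInf ((fun s => min (x s) 0) '' Set.Icc 0 t)
    let z : ℝ → ℝ := fun t => x t + y t
    (∀ t, 0 ≤ t → 0 ≤ z t) ∧
    y 0 = 0 ∧
    MonotoneOn y (Set.Ici 0) ∧
    ∃ f : StieltjesFunction ℝ, (∀ t, 0 ≤ t → f t = y t) ∧
      ∫⁻ t in Set.Ici (0 : ℝ), ENNReal.ofReal (z t) ∂f.measure = 0 := by
  intro y z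
  have hz : ∀ t, z t = x t - Skorohod.runningInf x t := fun t => (sub_eq_add_neg _ _).symm
  refine ⟨fun t ht => (hz t).symm ▸ sub_nonneg.2 (Skorohod.runningInf_le_apply hx ht),
    neg_eq_zero.2 (Skorohod.runningInf_zero hx0),
    fun s hs t ht hst => neg_le_neg (Skorohod.runningInf_antitoneOn hx hs ht hst),
    Skorohod.regulator x hx, fun t ht => Skorohod.regulator_apply hx ht, ?_⟩
  have hz0 : ∀ᵐ t ∂(Skorohod.regulator x hx).measure.restrict (Ici 0),
      ENNReal.ofReal (z t) = 0 := by
    rw [ae_restrict_iff' measurableSet_Ici]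
    refine measure_mono_null (fun t ht => ?_) (Skorohod.measure_regulator_setOf_runningInf_lt hx)
    simpa [hz] using ht
  rw [lintegral_congr_ae hz0, lintegral_zero]
end

section
/- Consider the linear program: minimize c₁q₁ + c₂q₂ + c₃q₃ subject to q₁/μ₁ + q₂/μ₂ = w₁, q₂/μ₃ + q₃/μ₃ = w₂, and q₁, q₂, q₃ ≥ 0, where μ₁, μ₂, μ₃, c₁, c₂, c₃ > 0 satisfy c₁μ₁ - c₂μ₂ + c₃μ₂ > 0, and w₁, w₂ ≥ 0. Then the optimal value equals ĥ(w₁,w₂) = (c₁μ₁)w₁ + (μ₃/μ₂)(c₂μ₂ - c₁μ₁)w₂ when μ₃w₂ ≤ μ₂w₁, and equals (c₂μ₂ - c₃μ₂)w₁ + (c₃μ₃)w₂ when μ₃w₂ ≥ μ₂w₁. -/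
/-!
Eliminating `q₁ = μ₁ (w₁ - q₂/μ₂)` and `q₃ = μ₃ w₂ - q₂` through the two workload constraints,
the LP becomes a one-dimensional problem in `q₂ ∈ [0, min (μ₂ w₁) (μ₃ w₂)]` whose cost has slope
`-(c₁μ₁ - c₂μ₂ + c₃μ₂)/μ₂ < 0`. The minimum is therefore attained at `q₂ = min (μ₂ w₁) (μ₃ w₂)`,
and the two branches of `ĥ` are the two values of this minimum.
-/

namespace WorkloadLP

variable (μ₁ μ₂ μ₃ c₁ c₂ c₃ w₁ w₂ : ℝ)

noncomputable def reducedCost (q₂ : ℝ) : ℝ :=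
  c₁ * μ₁ * w₁ + c₃ * μ₃ * w₂ - (c₁ * μ₁ - c₂ * μ₂ + c₃ * μ₂) / μ₂ * q₂

theorem feasibleCosts_eq_image {μ₁ μ₂ μ₃} (hμ₁ : 0 < μ₁) (hμ₂ : 0 < μ₂) (hμ₃ : 0 < μ₃) :
    {v : ℝ | ∃ q₁ q₂ q₃ : ℝ, 0 ≤ q₁ ∧ 0 ≤ q₂ ∧ 0 ≤ q₃ ∧
        q₁ / μ₁ + q₂ / μ₂ = w₁ ∧ q₂ / μ₃ + q₃ / μ₃ = w₂ ∧
        v = c₁ * q₁ + c₂ * q₂ + c₃ * q₃} =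
      reducedCost μ₁ μ₂ μ₃ c₁ c₂ c₃ w₁ w₂ '' Set.Icc 0 (min (μ₂ * w₁) (μ₃ * w₂)) := by
  ext v
  constructor
  · rintro ⟨q₁, q₂, q₃, hq₁, hq₂, hq₃, hw₁, hw₂, rfl⟩
    have hq₁_eq : q₁ = μ₁ * (w₁ - q₂ / μ₂) := by
      rw [← hw₁]; field_simp; ring
    have hq₃_eq : q₃ = μ₃ * w₂ - q₂ := by
      rw [← hw₂]; field_simp; ring
    have hq₂_le₁ : q₂ ≤ μ₂ * w₁ := by
      rw [← hw₁, mul_add, mul_div_cancel₀ _ hμ₂.ne']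
      linarith [div_nonneg hq₁ hμ₁.le, mul_nonneg hμ₂.le (div_nonneg hq₁ hμ₁.le)]
    refine ⟨q₂, ⟨hq₂, le_min hq₂_le₁ (by linarith)⟩, ?_⟩
    rw [reducedCost, hq₁_eq, hq₃_eq]
    field_simp
    ring
  · rintro ⟨q₂, ⟨hq₂, hq₂_le⟩, rfl⟩
    have hq₂_le₁ : q₂ / μ₂ ≤ w₁ := by
      rw [div_le_iff₀ hμ₂]; linarith [min_le_left (μ₂ * w₁) (μ₃ * w₂)]
    have hq₂_le₂ : q₂ ≤ μ₃ * w₂ := hq₂_le.trans (min_le_right _ _)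
    refine ⟨μ₁ * (w₁ - q₂ / μ₂), q₂, μ₃ * w₂ - q₂,
      mul_nonneg hμ₁.le (by linarith), hq₂, by linarith, ?_, ?_, ?_⟩
    · field_simp; ring
    · field_simp; ring
    · rw [reducedCost]; field_simp; ring

theorem reducedCost_antitone {μ₂ c₁ c₂ c₃} (hμ₂ : 0 < μ₂)
    (hreg : 0 < c₁ * μ₁ - c₂ * μ₂ + c₃ * μ₂) :
    Antitone (reducedCost μ₁ μ₂ μ₃ c₁ c₂ c₃ w₁ w₂) := fun _ _ h => by
  have := mul_le_mul_of_nonneg_left h (div_pos hreg hμ₂).le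
  unfold reducedCost
  linarith

theorem reducedCost_min {μ₂} (hμ₂ : 0 < μ₂) :
    reducedCost μ₁ μ₂ μ₃ c₁ c₂ c₃ w₁ w₂ (min (μ₂ * w₁) (μ₃ * w₂)) =
      if μ₃ * w₂ ≤ μ₂ * w₁ then
        (c₁ * μ₁) * w₁ + (μ₃ / μ₂) * (c₂ * μ₂ - c₁ * μ₁) * w₂
      else
        (c₂ * μ₂ - c₃ * μ₂) * w₁ + (c₃ * μ₃) * w₂ := by
  unfold reducedCost
  split_ifs with h
  · rw [min_eq_right h]; field_simp; ring
  · rw [min_eq_left (not_le.mp h).le]; field_simp; ring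

end WorkloadLP

open WorkloadLP in
theorem workload_LP_value_general (μ₁ μ₂ μ₃ c₁ c₂ c₃ w₁ w₂ : ℝ)
    (hμ₁ : 0 < μ₁) (hμ₂ : 0 < μ₂) (hμ₃ : 0 < μ₃)
    (hreg : 0 < c₁ * μ₁ - c₂ * μ₂ + c₃ * μ₂)
    (hw₁ : 0 ≤ w₁) (hw₂ : 0 ≤ w₂) :
    IsLeast {v : ℝ | ∃ q₁ q₂ q₃ : ℝ, 0 ≤ q₁ ∧ 0 ≤ q₂ ∧ 0 ≤ q₃ ∧
        q₁ / μ₁ + q₂ / μ₂ = w₁ ∧ q₂ / μ₃ + q₃ / μ₃ = w₂ ∧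
        v = c₁ * q₁ + c₂ * q₂ + c₃ * q₃}
      (if μ₃ * w₂ ≤ μ₂ * w₁ then
          (c₁ * μ₁) * w₁ + (μ₃ / μ₂) * (c₂ * μ₂ - c₁ * μ₁) * w₂
        else
          (c₂ * μ₂ - c₃ * μ₂) * w₁ + (c₃ * μ₃) * w₂) := by
  rw [feasibleCosts_eq_image c₁ c₂ c₃ w₁ w₂ hμ₁ hμ₂ hμ₃, ← reducedCost_min μ₁ μ₃ c₁ c₂ c₃ w₁ w₂ hμ₂]
  have hmin : 0 ≤ min (μ₂ * w₁) (μ₃ * w₂) := le_min (by positivity) (by positivity)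
  exact ((reducedCost_antitone μ₁ μ₃ w₁ w₂ hμ₂ hreg).antitoneOn _).map_isGreatest
    (isGreatest_Icc hmin)

/-- The optimal value of the static workload LP
`minimize c₁q₁ + c₂q₂ + c₃q₃` subject to `q₁/μ₁ + q₂/μ₂ = w₁`,
`q₂/μ₃ + q₃/μ₃ = w₂`, `q ≥ 0`, equals `ĥ(w₁, w₂)`. -/
theorem workload_LP_value (μ₁ μ₂ μ₃ c₁ c₂ c₃ w₁ w₂ : ℝ)
    (hμ₁ : 0 < μ₁) (hμ₂ : 0 < μ₂) (hμ₃ : 0 < μ₃)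
    (hc₁ : 0 < c₁) (hc₂ : 0 < c₂) (hc₃ : 0 < c₃)
    (hreg : 0 < c₁ * μ₁ - c₂ * μ₂ + c₃ * μ₂)
    (hw₁ : 0 ≤ w₁) (hw₂ : 0 ≤ w₂) :
    IsLeast {v : ℝ | ∃ q₁ q₂ q₃ : ℝ, 0 ≤ q₁ ∧ 0 ≤ q₂ ∧ 0 ≤ q₃ ∧
        q₁ / μ₁ + q₂ / μ₂ = w₁ ∧ q₂ / μ₃ + q₃ / μ₃ = w₂ ∧
        v = c₁ * q₁ + c₂ * q₂ + c₃ * q₃}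
      (if μ₃ * w₂ ≤ μ₂ * w₁ then
          (c₁ * μ₁) * w₁ + (μ₃ / μ₂) * (c₂ * μ₂ - c₁ * μ₁) * w₂
        else
          (c₂ * μ₂ - c₃ * μ₂) * w₁ + (c₃ * μ₃) * w₂) :=
  workload_LP_value_general μ₁ μ₂ μ₃ c₁ c₂ c₃ w₁ w₂ hμ₁ hμ₂ hμ₃ hreg hw₁ hw₂
end

section
/- Under the assumptions of the workload LP (μᵢ, cᵢ > 0, c₁μ₁ - c₂μ₂ + c₃μ₂ > 0, w₁, w₂ ≥ 0), the point (q₁*, q₂*, q₃*) given by q₁* = (μ₁/μ₂)(μ₂w₁ - μ₃w₂), q₂* = μ₃w₂, q₃* = 0 when μ₃w₂ ≤ μ₂w₁, and q₁* = 0, q₂* = μ₂w₁, q₃* = μ₃w₂ - μ₂w₁ when μ₃w₂ ≥ μ₂w₁, is feasible for the LP and achieves the optimal value ĥ(w₁, w₂). -/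
/-!
Solving the two equality constraints for `q₁` and `q₃` leaves the feasible set as the segment
`0 ≤ q₂ ≤ min (μ₃ w₂) (μ₂ w₁)`, on which the cost is affine in `q₂` with slope
`-(c₁μ₁ - c₂μ₂ + c₃μ₂) / μ₂ < 0`. The minimum is therefore attained at the right end point,
which is the stated point in both cases.
-/

section WorkloadLP

variable {μ₁ μ₂ μ₃ w₁ w₂ q₁ q₂ q₃ : ℝ}

theorem workload_constraints_iff (hμ₁ : μ₁ ≠ 0) (hμ₂ : μ₂ ≠ 0) (hμ₃ : μ₃ ≠ 0) :
    (q₁ / μ₁ + q₂ / μ₂ = w₁ ∧ q₂ / μ₃ + q₃ / μ₃ = w₂) ↔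
      (q₁ = μ₁ / μ₂ * (μ₂ * w₁ - q₂) ∧ q₃ = μ₃ * w₂ - q₂) := by
  refine and_congr ⟨fun h => ?_, fun h => ?_⟩ ⟨fun h => ?_, fun h => ?_⟩
  · field_simp at h ⊢; linarith
  · subst h; field_simp; ring
  · field_simp at h; linarith
  · subst h; field_simp; ring

theorem le_min_of_workload_constraints (hμ₁ : 0 < μ₁) (hμ₂ : 0 < μ₂) (hμ₃ : 0 < μ₃)
    (hq₁ : 0 ≤ q₁) (hq₃ : 0 ≤ q₃)
    (h₁ : q₁ / μ₁ + q₂ / μ₂ = w₁) (h₂ : q₂ / μ₃ + q₃ / μ₃ = w₂) :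
    q₂ ≤ min (μ₃ * w₂) (μ₂ * w₁) := by
  obtain ⟨rfl, rfl⟩ :=
    (workload_constraints_iff hμ₁.ne' hμ₂.ne' hμ₃.ne').1 ⟨h₁, h₂⟩
  have : 0 ≤ μ₂ * w₁ - q₂ := nonneg_of_mul_nonneg_right hq₁ (div_pos hμ₁ hμ₂)
  exact le_min (by linarith) (by linarith)

theorem workload_cost_eq (c₁ c₂ c₃ : ℝ) (hμ₂ : μ₂ ≠ 0) (t : ℝ) :
    c₁ * (μ₁ / μ₂ * (μ₂ * w₁ - t)) + c₂ * t + c₃ * (μ₃ * w₂ - t) =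
      c₁ * μ₁ * w₁ + c₃ * μ₃ * w₂ - (c₁ * μ₁ - c₂ * μ₂ + c₃ * μ₂) / μ₂ * t := by
  field_simp
  ring

theorem workload_cost_antitone {c₁ c₂ c₃ : ℝ} (hμ₂ : 0 < μ₂)
    (hreg : 0 < c₁ * μ₁ - c₂ * μ₂ + c₃ * μ₂) :
    Antitone fun t => c₁ * (μ₁ / μ₂ * (μ₂ * w₁ - t)) + c₂ * t + c₃ * (μ₃ * w₂ - t) := by
  intro s t hst
  simp only [workload_cost_eq c₁ c₂ c₃ hμ₂.ne']
  have := div_pos hreg hμ₂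
  nlinarith

end WorkloadLP

theorem workload_LP_optimal_solution_general (μ₁ μ₂ μ₃ c₁ c₂ c₃ w₁ w₂ : ℝ)
    (hμ₁ : 0 < μ₁) (hμ₂ : 0 < μ₂) (hμ₃ : 0 < μ₃)
    (hreg : 0 < c₁ * μ₁ - c₂ * μ₂ + c₃ * μ₂)
    (hw₁ : 0 ≤ w₁) (hw₂ : 0 ≤ w₂) :
    let q₁s : ℝ := if μ₃ * w₂ ≤ μ₂ * w₁ then (μ₁ / μ₂) * (μ₂ * w₁ - μ₃ * w₂) else 0
    let q₂s : ℝ := if μ₃ * w₂ ≤ μ₂ * w₁ then μ₃ * w₂ else μ₂ * w₁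
    let q₃s : ℝ := if μ₃ * w₂ ≤ μ₂ * w₁ then 0 else μ₃ * w₂ - μ₂ * w₁
    let hhat : ℝ := if μ₃ * w₂ ≤ μ₂ * w₁ then
        (c₁ * μ₁) * w₁ + (μ₃ / μ₂) * (c₂ * μ₂ - c₁ * μ₁) * w₂
      else
        (c₂ * μ₂ - c₃ * μ₂) * w₁ + (c₃ * μ₃) * w₂
    (0 ≤ q₁s ∧ 0 ≤ q₂s ∧ 0 ≤ q₃s ∧
      q₁s / μ₁ + q₂s / μ₂ = w₁ ∧ q₂s / μ₃ + q₃s / μ₃ = w₂) ∧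
    c₁ * q₁s + c₂ * q₂s + c₃ * q₃s = hhat ∧
    (∀ q₁ q₂ q₃ : ℝ, 0 ≤ q₁ → 0 ≤ q₂ → 0 ≤ q₃ →
      q₁ / μ₁ + q₂ / μ₂ = w₁ → q₂ / μ₃ + q₃ / μ₃ = w₂ →
      c₁ * q₁s + c₂ * q₂s + c₃ * q₃s ≤ c₁ * q₁ + c₂ * q₂ + c₃ * q₃) := by
  intro q₁s q₂s q₃s hhat
  set m := min (μ₃ * w₂) (μ₂ * w₁)
  have hq₂s : q₂s = m := by
    simp only [q₂s, m]; split_ifs with h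
    exacts [(min_eq_left h).symm, (min_eq_right (not_le.1 h).le).symm]
  have hq₁s : q₁s = μ₁ / μ₂ * (μ₂ * w₁ - q₂s) := by
    simp only [q₁s, q₂s]; split_ifs <;> simp
  have hq₃s : q₃s = μ₃ * w₂ - q₂s := by
    simp only [q₃s, q₂s]; split_ifs <;> simp
  have hfeas := (workload_constraints_iff hμ₁.ne' hμ₂.ne' hμ₃.ne').2 ⟨hq₁s, hq₃s⟩
  have hm : 0 ≤ m := le_min (by positivity) (by positivity)
  refine ⟨⟨?_, hq₂s ▸ hm, ?_, hfeas⟩, ?_, ?_⟩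
  · rw [hq₁s, hq₂s]
    exact mul_nonneg (by positivity) (sub_nonneg.2 (min_le_right _ _))
  · rw [hq₃s, hq₂s]
    exact sub_nonneg.2 (min_le_left _ _)
  · simp only [q₁s, q₂s, q₃s, hhat]
    split_ifs <;> field_simp <;> ring
  · intro q₁ q₂ q₃ hq₁ _ hq₃ h₁ h₂
    obtain ⟨rfl, rfl⟩ := (workload_constraints_iff hμ₁.ne' hμ₂.ne' hμ₃.ne').1 ⟨h₁, h₂⟩
    rw [hq₁s, hq₃s, hq₂s]
    exact workload_cost_antitone hμ₂ hreg
      (le_min_of_workload_constraints hμ₁ hμ₂ hμ₃ hq₁ hq₃ h₁ h₂)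

/-- The explicit point `(q₁*, q₂*, q₃*)` is feasible for the static workload LP
and achieves the optimal value `ĥ(w₁, w₂)`. -/
theorem workload_LP_optimal_solution (μ₁ μ₂ μ₃ c₁ c₂ c₃ w₁ w₂ : ℝ)
    (hμ₁ : 0 < μ₁) (hμ₂ : 0 < μ₂) (hμ₃ : 0 < μ₃)
    (hc₁ : 0 < c₁) (hc₂ : 0 < c₂) (hc₃ : 0 < c₃)
    (hreg : 0 < c₁ * μ₁ - c₂ * μ₂ + c₃ * μ₂)
    (hw₁ : 0 ≤ w₁) (hw₂ : 0 ≤ w₂) :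
    let q₁s : ℝ := if μ₃ * w₂ ≤ μ₂ * w₁ then (μ₁ / μ₂) * (μ₂ * w₁ - μ₃ * w₂) else 0
    let q₂s : ℝ := if μ₃ * w₂ ≤ μ₂ * w₁ then μ₃ * w₂ else μ₂ * w₁
    let q₃s : ℝ := if μ₃ * w₂ ≤ μ₂ * w₁ then 0 else μ₃ * w₂ - μ₂ * w₁
    let hhat : ℝ := if μ₃ * w₂ ≤ μ₂ * w₁ then
        (c₁ * μ₁) * w₁ + (μ₃ / μ₂) * (c₂ * μ₂ - c₁ * μ₁) * w₂
      else
        (c₂ * μ₂ - c₃ * μ₂) * w₁ + (c₃ * μ₃) * w₂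
    (0 ≤ q₁s ∧ 0 ≤ q₂s ∧ 0 ≤ q₃s ∧
      q₁s / μ₁ + q₂s / μ₂ = w₁ ∧ q₂s / μ₃ + q₃s / μ₃ = w₂) ∧
    c₁ * q₁s + c₂ * q₂s + c₃ * q₃s = hhat ∧
    (∀ q₁ q₂ q₃ : ℝ, 0 ≤ q₁ → 0 ≤ q₂ → 0 ≤ q₃ →
      q₁ / μ₁ + q₂ / μ₂ = w₁ → q₂ / μ₃ + q₃ / μ₃ = w₂ →
      c₁ * q₁s + c₂ * q₂s + c₃ * q₃s ≤ c₁ * q₁ + c₂ * q₂ + c₃ * q₃) :=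
  workload_LP_optimal_solution_general μ₁ μ₂ μ₃ c₁ c₂ c₃ w₁ w₂ hμ₁ hμ₂ hμ₃ hreg hw₁ hw₂
end

section
/- Let {f_n} and {g_n} be sequences in D([0,∞):ℝ) and f, g continuous functions on [0,∞) such that f_n → f and g_n → g in the Skorohod topology. Suppose ∫_{[0,∞)} e^{-γt} 1_{{g(t)=0}} dt = 0 for some γ > 0, and let ε_n ≥ 0 with ε_n → 0. Then for all T > 0, ∫_0^T e^{-γt} f_n(t) 1_{{g_n(t) ≥ ε_n}} dt → ∫_0^T e^{-γt} f(t) 1_{{g(t) ≥ 0}} dt as n → ∞. -/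
open MeasureTheory Set Filter

open Topology

/-! Dominated convergence on `(0, T]`. Eventually the integrands are bounded by `‖f‖ + 1`, by
uniform convergence of `fₙ`. The indicator `1_{εₙ ≤ gₙ(t)}` converges to `1_{0 ≤ g(t)}` wherever
`g(t) ≠ 0`, since `gₙ(t) → g(t)` and `εₙ → 0`; and `{g = 0}` is a null set, because it carries
no mass of the positive integrable weight `e^{-γt}`. The right-continuous `fₙ, gₙ` are
measurable as pointwise limits of their values at dyadic points approaching from the right. -/

noncomputable def dyadicRightApprox (k : ℕ) (t : ℝ) : ℝ := (⌊t * 2 ^ k⌋ + 1) / 2 ^ k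

lemma lt_dyadicRightApprox (k : ℕ) (t : ℝ) : t < dyadicRightApprox k t := by
  rw [dyadicRightApprox, lt_div_iff₀ (by positivity)]
  exact_mod_cast Int.lt_floor_add_one (t * 2 ^ k)

lemma dyadicRightApprox_le (k : ℕ) (t : ℝ) : dyadicRightApprox k t ≤ t + (2 ^ k)⁻¹ := by
  have h2k : (0 : ℝ) < 2 ^ k := by positivity
  rw [dyadicRightApprox, div_le_iff₀ h2k, add_mul, inv_mul_cancel₀ h2k.ne']
  linarith [Int.floor_le (t * 2 ^ k)]

lemma tendsto_dyadicRightApprox (t : ℝ) :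
    Tendsto (dyadicRightApprox · t) atTop (𝓝[≥] t) := by
  have hupper : Tendsto (fun k : ℕ => t + ((2 : ℝ) ^ k)⁻¹) atTop (𝓝 t) := by
    simpa using tendsto_const_nhds.add
      (tendsto_inv_atTop_zero.comp (tendsto_pow_atTop_atTop_of_one_lt (one_lt_two : (1 : ℝ) < 2)))
  refine tendsto_nhdsWithin_iff.mpr ⟨?_, .of_forall fun k => (lt_dyadicRightApprox k t).le⟩
  exact tendsto_of_tendsto_of_tendsto_of_le_of_le tendsto_const_nhds hupper
    (fun k => (lt_dyadicRightApprox k t).le) (dyadicRightApprox_le · t)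

lemma stronglyMeasurable_comp_dyadicRightApprox {E : Type*} [TopologicalSpace E] (x : ℝ → E)
    (k : ℕ) : StronglyMeasurable (x ∘ dyadicRightApprox k) := by
  have hfactor : x ∘ dyadicRightApprox k
      = (fun j : ℤ => x ((j + 1) / 2 ^ k)) ∘ fun t : ℝ => ⌊t * 2 ^ k⌋ := by
    ext t; simp [dyadicRightApprox]
  rw [hfactor]
  exact StronglyMeasurable.of_discrete.comp_measurable (measurable_id.mul_const _).floor

lemma aestronglyMeasurable_restrict_of_continuousWithinAt_Ici {E : Type*} [TopologicalSpace E]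
    [TopologicalSpace.PseudoMetrizableSpace E] {x : ℝ → E} {μ : Measure ℝ} {s : Set ℝ}
    (hs : MeasurableSet s) (hx : ∀ t ∈ s, ContinuousWithinAt x (Ici t) t) :
    AEStronglyMeasurable x (μ.restrict s) := by
  refine aestronglyMeasurable_of_tendsto_ae atTop
    (fun k => (stronglyMeasurable_comp_dyadicRightApprox x k).aestronglyMeasurable) ?_
  filter_upwards [ae_restrict_mem hs] with t ht
  exact (hx t ht).tendsto.comp (tendsto_dyadicRightApprox t)

lemma ae_notMem_of_integral_mul_indicator_eq_zero {α : Type*} [MeasurableSpace α]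
    {μ : Measure α} {s S : Set α} (hS : MeasurableSet S) {w : α → ℝ} (hw : ∀ t, 0 < w t)
    (hint : IntegrableOn w s μ) (hzero : ∫ t in s, w t * S.indicator (fun _ => 1) t ∂μ = 0) :
    ∀ᵐ t ∂μ.restrict s, t ∉ S := by
  have hind : (fun t => w t * S.indicator (fun _ => (1 : ℝ)) t) = S.indicator w := by
    ext t; by_cases ht : t ∈ S <;> simp [ht]
  rw [hind, integral_eq_zero_iff_of_nonneg (indicator_nonneg fun t _ => (hw t).le)
    (hint.indicator hS)] at hzero
  filter_upwards [hzero] with t ht htS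
  exact (hw t).ne' (by simpa [htS] using ht)

lemma tendsto_ite_le_of_ne {ι α β : Type*} [TopologicalSpace α] [LinearOrder α]
    [OrderClosedTopology α] [TopologicalSpace β] {l : Filter ι} {a b : ι → α} {x y : α}
    (ha : Tendsto a l (𝓝 x)) (hb : Tendsto b l (𝓝 y)) (hxy : x ≠ y) (c d : β) :
    Tendsto (fun n => if a n ≤ b n then c else d) l (𝓝 (if x ≤ y then c else d)) := by
  refine tendsto_const_nhds.congr' ?_
  rcases hxy.lt_or_gt with hlt | hgt
  · filter_upwards [ha.eventually_lt hb hlt] with n hn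
    rw [if_pos hlt.le, if_pos hn.le]
  · filter_upwards [hb.eventually_lt ha hgt] with n hn
    rw [if_neg hgt.not_ge, if_neg hn.not_ge]

lemma eventually_norm_le_norm_add_one_of_tendstoUniformlyOn {ι α E : Type*}
    [SeminormedAddCommGroup E] {l : Filter ι} {F : ι → α → E} {f : α → E} {s : Set α}
    (h : TendstoUniformlyOn F f l s) : ∀ᶠ n in l, ∀ t ∈ s, ‖F n t‖ ≤ ‖f t‖ + 1 := by
  filter_upwards [Metric.tendstoUniformlyOn_iff.mp h 1 one_pos] with n hn t ht
  have hdist := hn t ht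
  rw [dist_eq_norm, norm_sub_rev] at hdist
  linarith [norm_le_insert' (F n t) (f t)]

lemma norm_exp_neg_mul_mul_ite_le {γ t : ℝ} (hγ : 0 ≤ γ) (ht : 0 ≤ t) (y : ℝ) (p : Prop)
    [Decidable p] : ‖Real.exp (-γ * t) * y * (if p then 1 else 0)‖ ≤ ‖y‖ := by
  have hexp : ‖Real.exp (-γ * t)‖ ≤ 1 := by
    rw [Real.norm_of_nonneg (Real.exp_pos _).le, Real.exp_le_one_iff]
    nlinarith
  have hind : ‖(if p then (1 : ℝ) else 0)‖ ≤ 1 := by split_ifs <;> simp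
  calc ‖Real.exp (-γ * t) * y * (if p then 1 else 0)‖
      = ‖Real.exp (-γ * t)‖ * ‖y‖ * ‖(if p then (1 : ℝ) else 0)‖ := by
        rw [norm_mul, norm_mul]
    _ ≤ 1 * ‖y‖ * 1 := by gcongr
    _ = ‖y‖ := by ring

theorem discounted_integral_indicator_ge_conv_general
    (f g : ℝ → ℝ) (fn gn : ℕ → ℝ → ℝ) (γ : ℝ) (hγ : 0 < γ)
    (hfn : ∀ n, RCLL (fn n)) (hgn : ∀ n, RCLL (gn n))
    (hf : Continuous f) (hg : Continuous g)
    (hfconv : ∀ T : ℝ, 0 < T → TendstoUniformlyOn fn f atTop (Set.Icc 0 T))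
    (hgconv : ∀ T : ℝ, 0 < T → TendstoUniformlyOn gn g atTop (Set.Icc 0 T))
    (hzero : ∫ t in Set.Ici (0 : ℝ),
        Real.exp (-γ * t) * Set.indicator {s : ℝ | g s = 0} (fun _ => (1 : ℝ)) t = 0)
    (εn : ℕ → ℝ) (hεn0 : Tendsto εn atTop (nhds 0)) :
    ∀ T : ℝ, 0 < T →
      Tendsto (fun n => ∫ t in (0 : ℝ)..T,
          Real.exp (-γ * t) * fn n t * (if εn n ≤ gn n t then (1 : ℝ) else 0))
        atTop
        (nhds (∫ t in (0 : ℝ)..T,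
          Real.exp (-γ * t) * f t * (if 0 ≤ g t then (1 : ℝ) else 0))) := by
  intro T hT
  have hweight : IntegrableOn (fun t => Real.exp (-γ * t)) (Ici 0) :=
    (integrableOn_Ici_iff_integrableOn_Ioi).mpr (exp_neg_integrableOn_Ioi 0 hγ)
  have hgne : ∀ᵐ t ∂volume.restrict (Ioc 0 T), g t ≠ 0 :=
    ae_restrict_of_ae_restrict_of_subset (Ioc_subset_Ioi_self.trans Ioi_subset_Ici_self) <|
      ae_notMem_of_integral_mul_indicator_eq_zero
        (measurableSet_eq_fun hg.measurable measurable_const) (fun t => Real.exp_pos _)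
        hweight hzero
  have hmeas (x : ℝ → ℝ) (hx : RCLL x) : AEStronglyMeasurable x (volume.restrict (Ioc 0 T)) :=
    aestronglyMeasurable_restrict_of_continuousWithinAt_Ici measurableSet_Ioc
      fun t ht => hx.1 t ht.1.le
  simp only [intervalIntegral.integral_of_le hT.le]
  refine tendsto_integral_filter_of_dominated_convergence (fun t => ‖f t‖ + 1)
    (.of_forall fun n => ?_) ?_ (hf.norm.add continuous_const).integrableOn_Ioc ?_
  · have hind : Measurable fun y : ℝ => if εn n ≤ y then (1 : ℝ) else 0 :=
      Measurable.ite measurableSet_Ici measurable_const measurable_const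
    have hexp : Continuous fun t => Real.exp (-γ * t) := by fun_prop
    exact (hexp.aestronglyMeasurable.mul (hmeas _ (hfn n))).mul
      (hind.comp_aemeasurable (hmeas _ (hgn n)).aemeasurable).aestronglyMeasurable
  · filter_upwards [eventually_norm_le_norm_add_one_of_tendstoUniformlyOn (hfconv T hT)] with n hn
    filter_upwards [ae_restrict_mem measurableSet_Ioc] with t ht
    exact (norm_exp_neg_mul_mul_ite_le hγ.le ht.1.le _ _).trans (hn t (Ioc_subset_Icc_self ht))
  · filter_upwards [hgne, ae_restrict_mem measurableSet_Ioc] with t hgt ht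
    have htT : t ∈ Icc 0 T := Ioc_subset_Icc_self ht
    exact (tendsto_const_nhds.mul ((hfconv T hT).tendsto_at htT)).mul
      (tendsto_ite_le_of_ne hεn0 ((hgconv T hT).tendsto_at htT) hgt.symm 1 0)

/-- Convergence of discounted integrals with indicators `1_{g_n ≥ ε_n}`. -/
theorem discounted_integral_indicator_ge_conv
    (f g : ℝ → ℝ) (fn gn : ℕ → ℝ → ℝ) (γ : ℝ) (hγ : 0 < γ)
    (hfn : ∀ n, RCLL (fn n)) (hgn : ∀ n, RCLL (gn n))
    (hf : Continuous f) (hg : Continuous g)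
    (hfconv : ∀ T : ℝ, 0 < T → TendstoUniformlyOn fn f atTop (Set.Icc 0 T))
    (hgconv : ∀ T : ℝ, 0 < T → TendstoUniformlyOn gn g atTop (Set.Icc 0 T))
    (hzero : ∫ t in Set.Ici (0 : ℝ),
        Real.exp (-γ * t) * Set.indicator {s : ℝ | g s = 0} (fun _ => (1 : ℝ)) t = 0)
    (εn : ℕ → ℝ) (hεn : ∀ n, 0 ≤ εn n) (hεn0 : Tendsto εn atTop (nhds 0)) :
    ∀ T : ℝ, 0 < T →
      Tendsto (fun n => ∫ t in (0 : ℝ)..T,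
          Real.exp (-γ * t) * fn n t * (if εn n ≤ gn n t then (1 : ℝ) else 0))
        atTop
        (nhds (∫ t in (0 : ℝ)..T,
          Real.exp (-γ * t) * f t * (if 0 ≤ g t then (1 : ℝ) else 0))) :=
  discounted_integral_indicator_ge_conv_general f g fn gn γ hγ hfn hgn hf hg hfconv hgconv hzero εn
    hεn0
end

section
/- Let {f_n} and {g_n} be sequences in D([0,∞):ℝ) and f, g continuous functions on [0,∞) such that f_n → f and g_n → g uniformly on compacts. Suppose the set {t ≥ 0 : g(t) = 0} has Lebesgue measure zero, and let ε_n ≥ 0 with ε_n → 0. Then for all T > 0 and γ > 0, ∫_0^T e^{-γt} f_n(t) 1_{{g_n(t) ≤ ε_n}} dt → ∫_0^T e^{-γt} f(t) 1_{{g(t) ≤ 0}} dt as n → ∞. -/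
/-!
Dominated convergence on `(0, T]`. Since `f` is bounded on `[0, T]` and `fₙ → f` uniformly there,
the integrands are eventually bounded by a constant. At every `t` with `g t ≠ 0`, which is almost
every `t`, `gₙ t - εₙ → g t ≠ 0`, so the indicator `1{gₙ t - εₙ ≤ 0}` is eventually constant,
equal to `1{g t ≤ 0}`. Measurability of the càdlàg integrands comes from right-continuity.
-/

open MeasureTheory Set Filter

open scoped Topology

/-- The right-continuous function `x` is the pointwise limit of the measurable step functions
`t ↦ x (⌈2ᵏ t⌉ / 2ᵏ)`. -/
theorem measurable_of_continuousWithinAt_Ici {x : ℝ → ℝ}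
    (hx : ∀ t, ContinuousWithinAt x (Ici t) t) : Measurable x := by
  set grid : ℕ → ℝ → ℝ := fun k t => (⌈t * 2 ^ k⌉ : ℤ) / 2 ^ k
  have hmeas (k : ℕ) : Measurable (x ∘ grid k) :=
    (measurable_of_countable (fun m : ℤ => x (m / 2 ^ k))).comp
      (Int.measurable_ceil.comp (measurable_id.mul_const _))
  refine measurable_of_tendsto_metrizable hmeas (tendsto_pi_nhds.2 fun t => ?_)
  have hge (k : ℕ) : t ≤ grid k t := by
    rw [le_div_iff₀ (by positivity)]
    exact Int.le_ceil _
  have hle (k : ℕ) : grid k t ≤ t + (1 / 2 : ℝ) ^ k := by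
    rw [div_le_iff₀ (by positivity), add_mul, ← mul_pow, one_div_mul_cancel two_ne_zero,
      one_pow]
    exact (Int.ceil_lt_add_one _).le
  have hup : Tendsto (fun k : ℕ => t + (1 / 2 : ℝ) ^ k) atTop (𝓝 t) := by
    simpa using tendsto_const_nhds.add
      (tendsto_pow_atTop_nhds_zero_of_lt_one (by norm_num) (by norm_num : (1 / 2 : ℝ) < 1))
  have hgrid : Tendsto (fun k => grid k t) atTop (𝓝[≥] t) :=
    tendsto_nhdsWithin_iff.2 ⟨tendsto_of_tendsto_of_tendsto_of_le_of_le tendsto_const_nhds hup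
      hge hle, Eventually.of_forall hge⟩
  exact (hx t).tendsto.comp hgrid

theorem RCLL.measurable_comp_max_zero {x : ℝ → ℝ} (hx : RCLL x) :
    Measurable fun t => x (max t 0) := by
  refine measurable_of_continuousWithinAt_Ici fun t => ?_
  rcases lt_or_ge t 0 with ht | ht
  · refine (continuousAt_const (y := x 0)).congr ?_ |>.continuousWithinAt
    filter_upwards [Iio_mem_nhds ht] with s hs
    rw [max_eq_right (le_of_lt hs)]
  · refine (hx.1 t ht).congr (fun s hs => ?_) ?_
    · rw [max_eq_left (ht.trans hs)]
    · rw [max_eq_left ht]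

theorem RCLL.aemeasurable {x : ℝ → ℝ} (hx : RCLL x) :
    AEMeasurable x (volume.restrict (Ici 0)) := by
  refine ⟨_, hx.measurable_comp_max_zero, ?_⟩
  filter_upwards [ae_restrict_mem measurableSet_Ici] with t ht
  rw [max_eq_left ht]

theorem continuousAt_ite_nonpos {a : ℝ} (ha : a ≠ 0) :
    ContinuousAt (fun y : ℝ => if y ≤ 0 then (1 : ℝ) else 0) a := by
  rcases ha.lt_or_gt with ha | ha
  · refine (continuousAt_const (y := (1 : ℝ))).congr ?_
    filter_upwards [Iio_mem_nhds ha] with y hy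
    rw [if_pos (le_of_lt hy)]
  · refine (continuousAt_const (y := (0 : ℝ))).congr ?_
    filter_upwards [Ioi_mem_nhds ha] with y hy
    rw [if_neg (not_le.2 hy)]

theorem TendstoUniformlyOn.eventually_norm_le {ι α : Type*} {l : Filter ι} {s : Set α}
    {F : ι → α → ℝ} {f : α → ℝ} {C : ℝ} (hF : TendstoUniformlyOn F f l s)
    (hf : ∀ t ∈ s, ‖f t‖ ≤ C) : ∀ᶠ n in l, ∀ t ∈ s, ‖F n t‖ ≤ C + 1 := by
  filter_upwards [Metric.tendstoUniformlyOn_iff.1 hF 1 one_pos] with n hn t ht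
  have := norm_sub_norm_le (F n t) (f t)
  rw [← dist_eq_norm, dist_comm] at this
  linarith [hn t ht, hf t ht]

theorem tendsto_intervalIntegral_mul_ite_nonpos {F G : ℕ → ℝ → ℝ} {f g : ℝ → ℝ} {a b C : ℝ}
    (hab : a ≤ b) (hF : ∀ n, AEMeasurable (F n) (volume.restrict (Ioc a b)))
    (hG : ∀ n, AEMeasurable (G n) (volume.restrict (Ioc a b)))
    (hbound : ∀ᶠ n in atTop, ∀ t ∈ Ioc a b, ‖F n t‖ ≤ C)
    (hFlim : ∀ t ∈ Ioc a b, Tendsto (F · t) atTop (𝓝 (f t)))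
    (hGlim : ∀ t ∈ Ioc a b, Tendsto (G · t) atTop (𝓝 (g t)))
    (hg : ∀ᵐ t, t ∈ Ioc a b → g t ≠ 0) :
    Tendsto (fun n => ∫ t in a..b, F n t * if G n t ≤ 0 then (1 : ℝ) else 0) atTop
      (𝓝 (∫ t in a..b, f t * if g t ≤ 0 then (1 : ℝ) else 0)) := by
  have hind : Measurable fun y : ℝ => if y ≤ 0 then (1 : ℝ) else 0 :=
    Measurable.ite measurableSet_Iic measurable_const measurable_const
  refine intervalIntegral.tendsto_integral_filter_of_dominated_convergence (fun _ => C) ?_ ?_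
    intervalIntegrable_const ?_ <;> rw [uIoc_of_le hab]
  · exact Eventually.of_forall fun n =>
      ((hF n).mul (hind.comp_aemeasurable (hG n))).aestronglyMeasurable
  · filter_upwards [hbound] with n hn
    refine ae_of_all _ fun t ht => ?_
    rw [norm_mul]
    refine (mul_le_of_le_one_right (norm_nonneg _) ?_).trans (hn t ht)
    split_ifs <;> simp
  · filter_upwards [hg] with t hgt ht
    exact (hFlim t ht).mul ((continuousAt_ite_nonpos (hgt ht)).tendsto.comp (hGlim t ht))

theorem discounted_integral_indicator_le_conv_general
    (f g : ℝ → ℝ) (fn gn : ℕ → ℝ → ℝ)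
    (hfn : ∀ n, RCLL (fn n)) (hgn : ∀ n, RCLL (gn n))
    (hf : Continuous f)
    (hfconv : ∀ T : ℝ, 0 < T → TendstoUniformlyOn fn f atTop (Set.Icc 0 T))
    (hgconv : ∀ T : ℝ, 0 < T → TendstoUniformlyOn gn g atTop (Set.Icc 0 T))
    (hzero : MeasureTheory.volume {t : ℝ | 0 ≤ t ∧ g t = 0} = 0)
    (εn : ℕ → ℝ) (hεn0 : Tendsto εn atTop (nhds 0)) :
    ∀ T γ : ℝ, 0 < T → 0 < γ →
      Tendsto (fun n => ∫ t in (0 : ℝ)..T,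
          Real.exp (-γ * t) * fn n t * (if gn n t ≤ εn n then (1 : ℝ) else 0))
        atTop
        (nhds (∫ t in (0 : ℝ)..T,
          Real.exp (-γ * t) * f t * (if g t ≤ 0 then (1 : ℝ) else 0))) := by
  intro T γ hT hγ
  have hsub : Ioc 0 T ⊆ Icc 0 T := Ioc_subset_Icc_self
  have hrestrict : volume.restrict (Ioc 0 T) ≤ volume.restrict (Ici 0) :=
    Measure.restrict_mono (Ioc_subset_Icc_self.trans Icc_subset_Ici_self) le_rfl
  obtain ⟨C, hC⟩ := isCompact_Icc.exists_bound_of_continuousOn (hf.continuousOn (s := Icc 0 T))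
  have hweight {t : ℝ} (ht : t ∈ Ioc 0 T) : ‖Real.exp (-γ * t)‖ ≤ 1 := by
    rw [Real.norm_of_nonneg (Real.exp_pos _).le, Real.exp_le_one_iff]
    nlinarith [ht.1]
  have hg_ne_zero : ∀ᵐ t, t ∈ Ioc 0 T → g t ≠ 0 := by
    filter_upwards [measure_eq_zero_iff_ae_notMem.1 hzero] with t ht htI hgt
    exact ht ⟨htI.1.le, hgt⟩
  have hbound : ∀ᶠ n in atTop, ∀ t ∈ Ioc 0 T, ‖Real.exp (-γ * t) * fn n t‖ ≤ C + 1 := by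
    filter_upwards [(hfconv T hT).eventually_norm_le hC] with n hn t ht
    rw [norm_mul]
    exact (mul_le_of_le_one_left (norm_nonneg _) (hweight ht)).trans (hn t (hsub ht))
  simp_rw [← sub_nonpos (b := εn _)]
  exact tendsto_intervalIntegral_mul_ite_nonpos hT.le
    (fun n => (by fun_prop : Measurable fun t => Real.exp (-γ * t)).aemeasurable.mul
      ((hfn n).aemeasurable.mono_measure hrestrict))
    (fun n => ((hgn n).aemeasurable.mono_measure hrestrict).sub_const _) hbound
    (fun t ht => tendsto_const_nhds.mul ((hfconv T hT).tendsto_at (hsub ht)))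
    (fun t ht => by simpa using ((hgconv T hT).tendsto_at (hsub ht)).sub hεn0) hg_ne_zero

/-- Convergence of discounted integrals with indicators `1_{g_n ≤ ε_n}`. -/
theorem discounted_integral_indicator_le_conv
    (f g : ℝ → ℝ) (fn gn : ℕ → ℝ → ℝ)
    (hfn : ∀ n, RCLL (fn n)) (hgn : ∀ n, RCLL (gn n))
    (hf : Continuous f) (hg : Continuous g)
    (hfconv : ∀ T : ℝ, 0 < T → TendstoUniformlyOn fn f atTop (Set.Icc 0 T))
    (hgconv : ∀ T : ℝ, 0 < T → TendstoUniformlyOn gn g atTop (Set.Icc 0 T))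
    (hzero : MeasureTheory.volume {t : ℝ | 0 ≤ t ∧ g t = 0} = 0)
    (εn : ℕ → ℝ) (hεn : ∀ n, 0 ≤ εn n) (hεn0 : Tendsto εn atTop (nhds 0)) :
    ∀ T γ : ℝ, 0 < T → 0 < γ →
      Tendsto (fun n => ∫ t in (0 : ℝ)..T,
          Real.exp (-γ * t) * fn n t * (if gn n t ≤ εn n then (1 : ℝ) else 0))
        atTop
        (nhds (∫ t in (0 : ℝ)..T,
          Real.exp (-γ * t) * f t * (if g t ≤ 0 then (1 : ℝ) else 0))) :=
  discounted_integral_indicator_le_conv_general f g fn gn hfn hgn hf hfconv hgconv hzero εn hεn0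
end

section
/- Let Ψ : ℝ₊ → ℝ₊ be non-decreasing and Lipschitz with constant μ₃/μ₂, satisfying 0 ≤ Ψ(w₂) ≤ (μ₃/μ₂)w₂ for all w₂ ≥ 0. Let B₂ : [0,∞) → ℝ be continuous with B₂(0) = 0, and set W₂*(t) = B₂(t) + sup_{0≤s≤t} max(-B₂(s), 0). Let B₁ : [0,∞) → ℝ be continuous with B₁(0) ≥ 0. Then there is a unique continuous function W₁* : [0,∞) → ℝ satisfying W₁*(t) = B₁(t) + sup_{0≤s≤t} max(Ψ(W₂*(s)) - B₁(s), 0) for all t ≥ 0, and this W₁* satisfies W₁*(t) ≥ Ψ(W₂*(t)) ≥ 0 for all t ≥ 0. -/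
/-!
`W₂*` is the Skorokhod reflection `Γ(B₂)`, hence continuous and nonnegative on `[0, ∞)`, so
`Ψ(W₂*)` is continuous there. The defining formula for `W₁*` reads
`W₁* = Γ(B₁ - Ψ(W₂*)) + Ψ(W₂*)`, which gives continuity and, since `Γ ≥ 0`, the constraint
`W₁* ≥ Ψ(W₂*)`; uniqueness holds because the formula determines `W₁*` explicitly.
-/

open Set

/-- Reparametrising `Icc a t` as `lineMap a t '' Icc 0 1` makes the running supremum a supremum
over a fixed compact set; clamping with `max a` makes the integrand continuous everywhere. -/
theorem ContinuousOn.sSup_image_Icc {f : ℝ → ℝ} {a : ℝ} (hf : ContinuousOn f (Ici a)) :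
    ContinuousOn (fun t => sSup (f '' Icc a t)) (Ici a) := by
  have hg : Continuous fun p : ℝ × ℝ => f (max a (AffineMap.lineMap a p.1 p.2)) :=
    hf.comp_continuous (by simp only [AffineMap.lineMap_apply_ring']; fun_prop)
      fun _ => le_max_left a _
  refine ((isCompact_Icc (a := (0 : ℝ)) (b := 1)).continuous_sSup
    (f := fun t u => f (max a (AffineMap.lineMap a t u))) hg).continuousOn.congr
    fun t (ht : a ≤ t) => ?_
  rw [← segment_eq_Icc ht, segment_eq_image_lineMap, image_image]
  refine congrArg sSup (image_congr fun u hu => ?_)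
  have hmem : AffineMap.lineMap a t u ∈ Icc a t :=
    segment_eq_Icc ht ▸ lineMap_mem_segment (𝕜 := ℝ) a t hu
  rw [max_eq_right hmem.1]

theorem le_sSup_image_Icc {f : ℝ → ℝ} {a t : ℝ} (hf : ContinuousOn f (Icc a t)) (ht : a ≤ t) :
    f t ≤ sSup (f '' Icc a t) :=
  le_csSup (isCompact_Icc.image_of_continuousOn hf).bddAbove (mem_image_of_mem f ⟨ht, le_rfl⟩)

noncomputable def skorokhodMap (x : ℝ → ℝ) (t : ℝ) : ℝ :=
  x t + sSup ((fun s => max (-x s) 0) '' Icc 0 t)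

theorem ContinuousOn.skorokhodMap {x : ℝ → ℝ} (hx : ContinuousOn x (Ici 0)) :
    ContinuousOn (skorokhodMap x) (Ici 0) :=
  hx.add (ContinuousOn.sSup_image_Icc (by fun_prop))

theorem skorokhodMap_nonneg {x : ℝ → ℝ} (hx : ContinuousOn x (Ici 0)) {t : ℝ} (ht : 0 ≤ t) :
    0 ≤ skorokhodMap x t := by
  have hneg : ContinuousOn (fun s => max (-x s) 0) (Icc 0 t) :=
    (hx.mono Icc_subset_Ici_self).neg.sup continuousOn_const
  have hsup := le_sSup_image_Icc hneg ht
  unfold skorokhodMap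
  linarith [le_max_left (-x t) 0]

theorem reflected_workload_exists_unique_general (μ₂ μ₃ : ℝ)
    (Ψ : ℝ → ℝ)
    (hΨlip : ∀ a b : ℝ, 0 ≤ a → 0 ≤ b → |Ψ a - Ψ b| ≤ μ₃ / μ₂ * |a - b|)
    (hΨbd : ∀ w : ℝ, 0 ≤ w → 0 ≤ Ψ w ∧ Ψ w ≤ μ₃ / μ₂ * w)
    (B₁ B₂ : ℝ → ℝ) (hB₁ : Continuous B₁) (hB₂ : Continuous B₂) :
    let W₂ : ℝ → ℝ := fun t => B₂ t + sSup ((fun s => max (-(B₂ s)) 0) '' Set.Icc 0 t)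
    ∃ W₁ : ℝ → ℝ,
      (ContinuousOn W₁ (Set.Ici 0) ∧
        (∀ t, 0 ≤ t →
          W₁ t = B₁ t + sSup ((fun s => max (Ψ (W₂ s) - B₁ s) 0) '' Set.Icc 0 t)) ∧
        (∀ t, 0 ≤ t → Ψ (W₂ t) ≤ W₁ t ∧ 0 ≤ Ψ (W₂ t))) ∧
      ∀ W₁' : ℝ → ℝ,
        (ContinuousOn W₁' (Set.Ici 0) ∧
          ∀ t, 0 ≤ t →
            W₁' t = B₁ t + sSup ((fun s => max (Ψ (W₂ s) - B₁ s) 0) '' Set.Icc 0 t)) →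
        ∀ t, 0 ≤ t → W₁' t = W₁ t := by
  intro W₂
  have hW₂ : ContinuousOn W₂ (Ici 0) := hB₂.continuousOn.skorokhodMap
  have hW₂_nonneg : ∀ t, 0 ≤ t → 0 ≤ W₂ t := fun _ => skorokhodMap_nonneg hB₂.continuousOn
  have hΨ : ContinuousOn Ψ (Ici 0) :=
    (LipschitzOnWith.of_dist_le' fun a ha b hb => hΨlip a b ha hb).continuousOn
  have hΨW₂ : ContinuousOn (fun t => Ψ (W₂ t)) (Ici 0) := hΨ.comp hW₂ hW₂_nonneg
  set Y : ℝ → ℝ := fun t => B₁ t - Ψ (W₂ t)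
  have hY : ContinuousOn Y (Ici 0) := hB₁.continuousOn.sub hΨW₂
  have hW₁ : ∀ t, B₁ t + sSup ((fun s => max (Ψ (W₂ s) - B₁ s) 0) '' Icc 0 t) =
      skorokhodMap Y t + Ψ (W₂ t) := fun t => by
    simp only [skorokhodMap, Y, neg_sub]
    ring
  refine ⟨fun t => skorokhodMap Y t + Ψ (W₂ t),
    ⟨hY.skorokhodMap.add hΨW₂, fun t _ => (hW₁ t).symm,
      fun t ht => ⟨?_, (hΨbd _ (hW₂_nonneg t ht)).1⟩⟩,
    fun W₁' hW₁' t ht => (hW₁'.2 t ht).trans (hW₁ t)⟩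
  linarith [skorokhodMap_nonneg hY ht]

/-- Existence, uniqueness and the free-boundary constraint for the reflected
workload process `W₁*` driven by `B₁` and the reflected path `W₂*`. -/
theorem reflected_workload_exists_unique (μ₂ μ₃ : ℝ) (hμ₂ : 0 < μ₂) (hμ₃ : 0 < μ₃)
    (Ψ : ℝ → ℝ)
    (hΨmono : MonotoneOn Ψ (Set.Ici 0))
    (hΨlip : ∀ a b : ℝ, 0 ≤ a → 0 ≤ b → |Ψ a - Ψ b| ≤ μ₃ / μ₂ * |a - b|)
    (hΨbd : ∀ w : ℝ, 0 ≤ w → 0 ≤ Ψ w ∧ Ψ w ≤ μ₃ / μ₂ * w)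
    (B₁ B₂ : ℝ → ℝ) (hB₁ : Continuous B₁) (hB₂ : Continuous B₂)
    (hB₂0 : B₂ 0 = 0) (hB₁0 : 0 ≤ B₁ 0) :
    let W₂ : ℝ → ℝ := fun t => B₂ t + sSup ((fun s => max (-(B₂ s)) 0) '' Set.Icc 0 t)
    ∃ W₁ : ℝ → ℝ,
      (ContinuousOn W₁ (Set.Ici 0) ∧
        (∀ t, 0 ≤ t →
          W₁ t = B₁ t + sSup ((fun s => max (Ψ (W₂ s) - B₁ s) 0) '' Set.Icc 0 t)) ∧
        (∀ t, 0 ≤ t → Ψ (W₂ t) ≤ W₁ t ∧ 0 ≤ Ψ (W₂ t))) ∧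
      ∀ W₁' : ℝ → ℝ,
        (ContinuousOn W₁' (Set.Ici 0) ∧
          ∀ t, 0 ≤ t →
            W₁' t = B₁ t + sSup ((fun s => max (Ψ (W₂ s) - B₁ s) 0) '' Set.Icc 0 t)) →
        ∀ t, 0 ≤ t → W₁' t = W₁ t :=
  reflected_workload_exists_unique_general μ₂ μ₃ Ψ hΨlip hΨbd B₁ B₂ hB₁ hB₂
end
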